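/- For every natural number n ≥ 0, ∫_{−1}^{1} (1 − Pₙ(x)) / (1 − x) dx = 2·Hₙ, where Pₙ is the n-th Legendre polynomial and Hₙ = Σ_{k=1}^{n} 1/k is the n-th harmonic number (H₀ = 0). -/

import Mathlib

/-!
Substitute `x = 1 - 2t`. In the Bernstein basis `b n k` of degree `n`,
`Pₙ(1 - 2t) = ∑ (-1)ᵏ (n choose k) b n k t`, while `1 = ∑ b n k t`; the `k = 0` terms cancel and
`b n k t / t = (n / k) b (n-1) (k-1) t`. Every Bernstein polynomial of degree `n - 1` integrates
to `1 / n` over `[0, 1]`, so the integral equals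
`∑_{k=1}^n (1 - (-1)ᵏ (n choose k)) / k = Hₙ + ∑_{k=1}^n (-1)ᵏ⁺¹ (n choose k) / k`,
and the last sum is again `Hₙ` by Pascal's rule and induction on `n`.
-/

open Polynomial intervalIntegral

/-- The `n`-th Legendre polynomial via the Rodrigues formula
`Pₙ = (1/(2ⁿ n!)) dⁿ/dxⁿ (x²−1)ⁿ`. -/
noncomputable def legendrePoly (n : ℕ) : Polynomial ℝ :=
  Polynomial.C (1 / ((2 : ℝ) ^ n * (Nat.factorial n : ℝ))) *
    (Polynomial.derivative^[n] ((Polynomial.X ^ 2 - 1) ^ n))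

theorem Polynomial.integral_eval_derivative (p : ℝ[X]) (a b : ℝ) :
    ∫ x in a..b, p.derivative.eval x = p.eval b - p.eval a :=
  integral_eq_sub_of_hasDerivAt (fun x _ ↦ p.hasDerivAt x)
    (p.derivative.continuous.intervalIntegrable a b)

namespace bernsteinPolynomial

theorem integral_eval_succ {n ν : ℕ} (h : ν < n) :
    ∫ t in (0 : ℝ)..1, (bernsteinPolynomial ℝ n (ν + 1)).eval t =
      ∫ t in (0 : ℝ)..1, (bernsteinPolynomial ℝ n ν).eval t := by
  -- `b (n+1) (ν+1)` vanishes at both endpoints, and its derivative is `(n+1) (b n ν - b n (ν+1))`.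
  have hboundary := (bernsteinPolynomial ℝ (n + 1) (ν + 1)).integral_eval_derivative 0 1
  rw [derivative_succ_aux, eval_at_0, eval_at_1, if_neg (by omega), if_neg (by omega)] at hboundary
  simp only [eval_mul, eval_sub, eval_add, eval_natCast, eval_one] at hboundary
  rw [integral_const_mul, integral_sub ((Polynomial.continuous _).intervalIntegrable 0 1)
    ((Polynomial.continuous _).intervalIntegrable 0 1), sub_self, mul_eq_zero, sub_eq_zero]
    at hboundary
  exact (hboundary.resolve_left (by positivity)).symm

theorem integral_eval {n ν : ℕ} (h : ν ≤ n) :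
    ∫ t in (0 : ℝ)..1, (bernsteinPolynomial ℝ n ν).eval t = 1 / (n + 1) := by
  have hconst : ∀ ν ≤ n, ∫ t in (0 : ℝ)..1, (bernsteinPolynomial ℝ n ν).eval t =
      ∫ t in (0 : ℝ)..1, (bernsteinPolynomial ℝ n 0).eval t := by
    intro ν hν
    induction ν with
    | zero => rfl
    | succ ν ih => rw [integral_eval_succ hν, ih (by omega)]
  have htotal : ∑ ν ∈ Finset.range (n + 1),
      ∫ t in (0 : ℝ)..1, (bernsteinPolynomial ℝ n ν).eval t = 1 := by
    rw [← integral_finsetSum fun ν _ ↦ (Polynomial.continuous _).intervalIntegrable 0 1]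
    simp [← eval_finsetSum, bernsteinPolynomial.sum]
  rw [Finset.sum_congr rfl fun ν hν ↦ hconst ν (Finset.mem_range_succ_iff.mp hν),
    Finset.sum_const, Finset.card_range, nsmul_eq_mul] at htotal
  push_cast at htotal
  rw [hconst ν h, eq_div_iff (by positivity)]
  linarith

theorem add_one_mul_succ_succ (R : Type*) [CommRing R] (n ν : ℕ) :
    ((ν : R[X]) + 1) * bernsteinPolynomial R (n + 1) (ν + 1) =
      ((n : R[X]) + 1) * X * bernsteinPolynomial R n ν := by
  have hchoose : (((n + 1).choose (ν + 1) : ℕ) : R[X]) * (ν + 1) = (n + 1) * n.choose ν := by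
    simpa using congrArg (Nat.cast : ℕ → R[X]) (Nat.add_one_mul_choose_eq n ν).symm
  simp only [bernsteinPolynomial, Nat.add_sub_add_right]
  linear_combination X ^ (ν + 1) * (1 - X) ^ (n - ν) * hchoose

end bernsteinPolynomial

theorem sum_range_neg_one_pow_mul_choose_div_succ (n : ℕ) :
    ∑ k ∈ Finset.range (n + 1), (-1 : ℝ) ^ k * n.choose k / (k + 1) = 1 / (n + 1) := by
  have hshift : ∑ k ∈ Finset.range (n + 1), (-1 : ℝ) ^ k * (n + 1).choose (k + 1) = 1 := by
    have h := congrArg (Int.cast : ℤ → ℝ) (Int.alternating_sum_range_choose_of_ne n.succ_ne_zero)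
    push_cast at h
    rw [Finset.sum_range_succ'] at h
    simp only [pow_succ, pow_zero, Nat.choose_zero_right, Nat.cast_one, mul_one, mul_neg,
      neg_mul, Finset.sum_neg_distrib, Nat.succ_eq_add_one] at h
    linarith
  calc ∑ k ∈ Finset.range (n + 1), (-1 : ℝ) ^ k * n.choose k / (k + 1)
      = ∑ k ∈ Finset.range (n + 1), (-1 : ℝ) ^ k * (n + 1).choose (k + 1) / (n + 1) := by
        refine Finset.sum_congr rfl fun k _ ↦ ?_
        have hchoose : ((n : ℝ) + 1) * n.choose k = (n + 1).choose (k + 1) * (k + 1) := by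
          exact_mod_cast Nat.add_one_mul_choose_eq n k
        rw [div_eq_div_iff (by positivity) (by positivity)]
        linear_combination (-1 : ℝ) ^ k * hchoose
    _ = 1 / (n + 1) := by rw [← Finset.sum_div, hshift]

theorem sum_range_neg_one_pow_mul_choose_succ_div (n : ℕ) :
    ∑ k ∈ Finset.range n, (-1 : ℝ) ^ k * n.choose (k + 1) / (k + 1) =
      ∑ k ∈ Finset.range n, 1 / ((k : ℝ) + 1) := by
  induction n with
  | zero => simp
  | succ n ih =>
    have hpascal : ∑ k ∈ Finset.range (n + 1), (-1 : ℝ) ^ k * (n + 1).choose (k + 1) / (k + 1) =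
        ∑ k ∈ Finset.range (n + 1), (-1 : ℝ) ^ k * n.choose k / (k + 1) +
          ∑ k ∈ Finset.range n, (-1 : ℝ) ^ k * n.choose (k + 1) / (k + 1) := by
      simp only [Nat.choose_succ_succ, Nat.cast_add, mul_add, add_div, Finset.sum_add_distrib,
        Finset.sum_range_succ _ n, Nat.choose_succ_self]
      simp only [Nat.cast_zero, mul_zero, zero_div, add_zero]
      ring
    rw [hpascal, sum_range_neg_one_pow_mul_choose_div_succ, ih, Finset.sum_range_succ _ n]
    ring

theorem legendrePoly_eval_eq_sum (n : ℕ) (x : ℝ) :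
    (legendrePoly n).eval x = ∑ k ∈ Finset.range (n + 1),
      (n.choose k : ℝ) ^ 2 * ((x - 1) / 2) ^ k * ((x + 1) / 2) ^ (n - k) := by
  have hfactor : ((X : ℝ[X]) ^ 2 - 1) ^ n = (X - C 1) ^ n * (X - C (-1)) ^ n := by
    rw [← mul_pow]
    simp only [map_one, map_neg, sub_neg_eq_add]
    ring
  rw [legendrePoly, hfactor, iterate_derivative_mul, eval_mul, eval_C, eval_finsetSum,
    Finset.mul_sum]
  refine Finset.sum_congr rfl fun k hk ↦ ?_
  have hkn : k ≤ n := Finset.mem_range_succ_iff.mp hk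
  simp only [iterate_derivative_X_sub_pow, Nat.sub_sub_self hkn, eval_mul, eval_pow,
    eval_sub, eval_X, eval_C, eval_natCast, nsmul_eq_mul, Nat.descFactorial_eq_factorial_mul_choose,
    Nat.choose_symm hkn]
  have hfactorial : (n.choose k : ℝ) * k.factorial * (n - k).factorial = n.factorial := by
    exact_mod_cast Nat.choose_mul_factorial_mul_factorial hkn
  have htwo : (2 : ℝ) ^ n = 2 ^ k * 2 ^ (n - k) := by rw [← pow_add, Nat.add_sub_cancel' hkn]
  rw [div_pow, div_pow, ← hfactorial, htwo]
  push_cast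
  field_simp
  ring

theorem legendrePoly_eval_one_sub_two_mul (n : ℕ) (t : ℝ) :
    (legendrePoly n).eval (1 - 2 * t) = ∑ k ∈ Finset.range (n + 1),
      (-1) ^ k * n.choose k * (bernsteinPolynomial ℝ n k).eval t := by
  rw [legendrePoly_eval_eq_sum]
  refine Finset.sum_congr rfl fun k _ ↦ ?_
  simp only [bernsteinPolynomial, eval_mul, eval_pow, eval_sub, eval_one, eval_X, eval_natCast]
  rw [show (1 - 2 * t - 1) / 2 = -t by ring, show (1 - 2 * t + 1) / 2 = 1 - t by ring, neg_pow]
  ring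

theorem one_sub_legendrePoly_succ_eval_one_sub_two_mul (n : ℕ) (t : ℝ) :
    1 - (legendrePoly (n + 1)).eval (1 - 2 * t) = t * ∑ k ∈ Finset.range (n + 1),
      (n + 1) * (1 + (-1) ^ k * (n + 1).choose (k + 1)) / (k + 1) *
        (bernsteinPolynomial ℝ n k).eval t := by
  have hpartition : (1 : ℝ) =
      ∑ k ∈ Finset.range (n + 2), (bernsteinPolynomial ℝ (n + 1) k).eval t := by
    simp [← eval_finsetSum, bernsteinPolynomial.sum]
  rw [legendrePoly_eval_one_sub_two_mul]
  nth_rewrite 1 [hpartition]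
  rw [← Finset.sum_sub_distrib, Finset.sum_range_succ', Finset.mul_sum]
  simp only [pow_zero, Nat.choose_zero_right, Nat.cast_one, one_mul, sub_self, add_zero]
  refine Finset.sum_congr rfl fun k _ ↦ ?_
  have h := congrArg (eval t) (bernsteinPolynomial.add_one_mul_succ_succ ℝ n k)
  simp only [eval_mul, eval_add, eval_natCast, eval_one, eval_X] at h
  field_simp
  linear_combination (1 + (-1) ^ k * ((n + 1).choose (k + 1) : ℝ)) * h

theorem integral_one_sub_legendrePoly_succ_div (n : ℕ) :
    ∫ x in (-1 : ℝ)..1, (1 - (legendrePoly (n + 1)).eval x) / (1 - x) =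
      ∑ k ∈ Finset.range (n + 1), (1 + (-1) ^ k * (n + 1).choose (k + 1) : ℝ) / (k + 1) := by
  have hsubst := smul_integral_comp_sub_mul (a := 0) (b := 1)
    (fun x ↦ (1 - (legendrePoly (n + 1)).eval x) / (1 - x)) (2 : ℝ) 1
  norm_num at hsubst
  rw [← hsubst]
  have hae : ∀ᵐ t, t ∈ Set.uIoc (0 : ℝ) 1 →
      (1 - (legendrePoly (n + 1)).eval (1 - 2 * t)) / (2 * t) = 2⁻¹ * ∑ k ∈ Finset.range (n + 1),
        (n + 1) * (1 + (-1) ^ k * (n + 1).choose (k + 1)) / (k + 1) *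
          (bernsteinPolynomial ℝ n k).eval t := by
    filter_upwards [MeasureTheory.Measure.ae_ne MeasureTheory.volume 0] with t ht _
    rw [one_sub_legendrePoly_succ_eval_one_sub_two_mul]
    field_simp
  rw [integral_congr_ae hae, integral_const_mul,
    integral_finsetSum fun k _ ↦ ((Polynomial.continuous _).intervalIntegrable 0 1).const_mul _,
    ← mul_assoc, mul_inv_cancel₀ two_ne_zero, one_mul]
  refine Finset.sum_congr rfl fun k hk ↦ ?_
  rw [integral_const_mul, bernsteinPolynomial.integral_eval (Finset.mem_range_succ_iff.mp hk)]
  field_simp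

/-- Legendre/harmonic-number identity:
`∫_{−1}^{1} (1 − Pₙ(x))/(1 − x) dx = 2 Hₙ`, where `Hₙ = Σ_{k=1}^n 1/k`. -/
theorem legendre_harmonic_integral (n : ℕ) :
    ∫ x in (-1 : ℝ)..1, (1 - (legendrePoly n).eval x) / (1 - x) =
      2 * ∑ k ∈ Finset.Icc 1 n, (1 : ℝ) / k := by
  rcases n with _ | n
  · simp [legendrePoly]
  rw [integral_one_sub_legendrePoly_succ_div, ← Finset.Ico_add_one_right_eq_Icc,
    Finset.sum_Ico_eq_sum_range]
  simp only [add_div, Finset.sum_add_distrib, sum_range_neg_one_pow_mul_choose_succ_div,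
    add_tsub_cancel_right, Nat.cast_add, Nat.cast_one, add_comm (1 : ℝ)]
  ring
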